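/- Let k, t be positive integers with t ≤ k. For a t-element subset A of ZMod k, the least period r of A under the shift map satisfies: r divides k and k divides t·r. In particular, k/gcd(k,t) divides r. -/

import Mathlib

/-- The shift map on finsets of `ZMod m`. -/
def sh (m : ℕ) (A : Finset (ZMod m)) : Finset (ZMod m) := A.image (· + 1)

open Finset Function

theorem Finset.sum_image_add_right {G : Type*} [AddCommMonoid G] [IsRightCancelAdd G]
    [DecidableEq G] (s : Finset G) (c : G) :
    ∑ x ∈ s.image (· + c), x = ∑ x ∈ s, x + #s • c := by
  rw [sum_image fun _ _ _ _ ↦ add_right_cancel, sum_add_distrib, sum_const]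

theorem sh_iterate (m n : ℕ) (A : Finset (ZMod m)) :
    (sh m)^[n] A = A.image (· + (n : ZMod m)) := by
  induction n with
  | zero => simp
  | succ n ih =>
    rw [iterate_succ_apply', ih, sh, image_image]
    congr 1
    funext x
    simp [add_assoc]

theorem isPeriodicPt_sh (m : ℕ) (A : Finset (ZMod m)) : IsPeriodicPt (sh m) m A := by
  simp [IsPeriodicPt, IsFixedPt, sh_iterate]

/-- Shifting `n` times adds `n • #A` to the sum of the elements of `A`, so a period `n`
forces `n • #A = 0`. -/
theorem nsmul_card_eq_zero_of_isPeriodicPt_sh {m n : ℕ} {A : Finset (ZMod m)}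
    (h : IsPeriodicPt (sh m) n A) : n • (#A : ZMod m) = 0 := by
  have hsum : ∑ x ∈ A, x + #A • (n : ZMod m) = ∑ x ∈ A, x := by
    rw [← sum_image_add_right, ← sh_iterate, h.eq]
  rw [nsmul_eq_mul, mul_comm, ← nsmul_eq_mul]
  exact add_eq_left.mp hsum

/-- For a `t`-element subset `A` of `ZMod k`, the least period `r` of `A` under the
shift map satisfies `r ∣ k` and `k ∣ t * r`; in particular `k / gcd(k,t) ∣ r`. -/
theorem minimalPeriod_dvd (k t : ℕ) (ht : 0 < t)
    (A : Finset (ZMod k)) (hA : A.card = t) :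
    Function.minimalPeriod (sh k) A ∣ k ∧
    k ∣ t * Function.minimalPeriod (sh k) A ∧
    k / Nat.gcd k t ∣ Function.minimalPeriod (sh k) A := by
  have hzero : minimalPeriod (sh k) A • (t : ZMod k) = 0 :=
    hA ▸ nsmul_card_eq_zero_of_isPeriodicPt_sh (isPeriodicPt_minimalPeriod _ _)
  refine ⟨(isPeriodicPt_sh k A).minimalPeriod_dvd, ?_, ?_⟩
  · rw [← ZMod.natCast_eq_zero_iff, mul_comm, Nat.cast_mul, ← nsmul_eq_mul]
    exact hzero
  · rw [← ZMod.addOrderOf_coe' k ht.ne']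
    exact addOrderOf_dvd_of_nsmul_eq_zero hzero
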